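/- arXiv:0709.1252 — 2 statements merged into one kernel-verified Lean document; each statement's English description precedes it below -/
import Mathlib

section
/- Let $K \subset T^N$ be a subtorus with Lie algebra $k$, and let $\mu = (\mu_1, \mu_{\mathbb{C}}): \mathbb{C}^N \times \mathbb{C}^N \to k^* \times k^*_{\mathbb{C}}$ be the hyperkähler moment map, $\mu_1(z,w) = \pi\sum_i(|z_i|^2 - |w_i|^2)\iota^* u_i$, $\mu_{\mathbb{C}}(z,w) = -2\pi\sqrt{-1}\sum_i z_i w_i \iota^* u_i$. Then $(z,w)$ is a critical point of $\mu$ if and only if $\mathrm{span}\{\iota^* u_i : (z_i, w_i) \ne (0,0)\} \subsetneq k^*$. -/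
/-!
Write `S = {i | (zᵢ, wᵢ) ≠ (0, 0)}`. The differential of `f(a, b) = (|a|² - |b|², ab)` is onto
`ℝ × ℂ` away from the origin and vanishes at it, so the image of `dμ_{(z,w)}` consists of the pairs
`(∑_{i ∈ S} cᵢ ι*uᵢ, ∑_{i ∈ S} dᵢ ι*uᵢ)` with `cᵢ ∈ ℝ`, `dᵢ ∈ ℂ`. Splitting a complex functional
into real and imaginary parts, this is all of `k* × k*_ℂ` exactly when the `ι*uᵢ`, `i ∈ S`,
span `k*`.
-/

open Finset Complex ComplexConjugate

theorem Submodule.mem_span_image_iff_exists_fun_eq_zero {R M ι : Type*} [Semiring R]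
    [AddCommMonoid M] [Module R M] [Fintype ι] {u : ι → M} {s : Set ι} {x : M} :
    x ∈ span R (u '' s) ↔ ∃ c : ι → R, (∀ i ∉ s, c i = 0) ∧ ∑ i, c i • u i = x := by
  constructor
  · intro hx
    obtain ⟨l, hl, rfl⟩ := (Finsupp.mem_span_image_iff_linearCombination R).1 hx
    exact ⟨l, fun i hi => Finsupp.notMem_support_iff.1 (fun h => hi (hl h)),
      by rw [Finsupp.linearCombination_apply, Finsupp.sum_fintype _ _ (by simp)]⟩
  · rintro ⟨c, hc, rfl⟩
    refine sum_mem fun i _ => ?_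
    by_cases hi : i ∈ s
    · exact smul_mem _ _ (subset_span (Set.mem_image_of_mem u hi))
    · simp [hc i hi]

/-- The restriction `ι*uᵢ` to `k` of the `i`-th coordinate functional. -/
def Submodule.coordDual {R ι : Type*} [CommSemiring R] (k : Submodule R (ι → R)) (i : ι) :
    Module.Dual R k :=
  (LinearMap.proj i).comp k.subtype

namespace Submodule

variable {ι : Type*} [Fintype ι] {s : Set ι}

theorem mem_span_coordDual_iff {R : Type*} [CommSemiring R] {k : Submodule R (ι → R)}
    {γ : Module.Dual R k} :
    γ ∈ span R (k.coordDual '' s) ↔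
      ∃ c : ι → R, (∀ i ∉ s, c i = 0) ∧ ∀ X : k, γ X = ∑ i, c i * (X : ι → R) i := by
  simp only [mem_span_image_iff_exists_fun_eq_zero, LinearMap.ext_iff, eq_comm (b := γ _)]
  simp [coordDual]

theorem exists_forall_eq_sum_mul {R : Type*} [CommSemiring R] {k : Submodule R (ι → R)}
    (hk : span R (k.coordDual '' s) = ⊤) (γ : Module.Dual R k) :
    ∃ c : ι → R, (∀ i ∉ s, c i = 0) ∧ ∀ X : k, γ X = ∑ i, c i * (X : ι → R) i :=
  mem_span_coordDual_iff.1 (hk ▸ mem_top)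

theorem exists_forall_eq_sum_ofReal_mul {k : Submodule ℝ (ι → ℝ)}
    (hk : span ℝ (k.coordDual '' s) = ⊤) (β : k →ₗ[ℝ] ℂ) :
    ∃ d : ι → ℂ, (∀ i ∉ s, d i = 0) ∧ ∀ X : k, β X = ∑ i, d i * ((X : ι → ℝ) i : ℂ) := by
  obtain ⟨c, hc0, hc⟩ := exists_forall_eq_sum_mul hk (reLm ∘ₗ β)
  obtain ⟨e, he0, he⟩ := exists_forall_eq_sum_mul hk (imLm ∘ₗ β)
  refine ⟨fun i => ⟨c i, e i⟩, fun i hi => by simp [Complex.ext_iff, hc0 i hi, he0 i hi],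
    fun X => Complex.ext ?_ ?_⟩
  · simpa [re_sum] using hc X
  · simpa [im_sum] using he X

end Submodule

/- With `n = |z|² + |w|²`, the differential `D(a, b) = (2 Re(z̄a - w̄b), aw + zb)` satisfies
`D ∘ D* = (4n) × n`, so the witness is `D*(t / 4n, s / n)`. -/
theorem exists_two_re_sub_eq_and_add_eq {z w : ℂ} (h : (z, w) ≠ (0, 0)) (t : ℝ) (s : ℂ) :
    ∃ a b : ℂ, 2 * (conj z * a).re - 2 * (conj w * b).re = t ∧ a * w + z * b = s := by
  set n : ℝ := normSq z + normSq w
  have hn : (n : ℂ) ≠ 0 := ofReal_ne_zero.2 <| by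
    simpa [n, add_eq_zero_iff_of_nonneg (normSq_nonneg _) (normSq_nonneg _), not_and_or] using h
  have hn_eq : (n : ℂ) = conj z * z + conj w * w := by
    simp [n, normSq_eq_conj_mul_self]
  refine ⟨(t / 2 * z + s * conj w) / n, (s * conj z - t / 2 * w) / n, ?_, ?_⟩
  · have hdiff :
        conj z * ((t / 2 * z + s * conj w) / n) - conj w * ((s * conj z - t / 2 * w) / n)
          = (t / 2 : ℝ) := by
      field_simp
      rw [hn_eq]
      push_cast
      ring
    rw [← mul_sub, ← sub_re, hdiff, ofReal_re]
    ring
  · field_simp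
    rw [hn_eq]
    ring

theorem exists_forall_two_re_sub_eq_and_add_eq {ι : Type*} {z w : ι → ℂ} {c : ι → ℝ}
    {d : ι → ℂ} (hc : ∀ i, (z i, w i) = (0, 0) → c i = 0)
    (hd : ∀ i, (z i, w i) = (0, 0) → d i = 0) :
    ∃ ζ ω : ι → ℂ, ∀ i, 2 * (conj (z i) * ζ i).re - 2 * (conj (w i) * ω i).re = c i ∧
      ζ i * w i + z i * ω i = d i := by
  have pointwise (i : ι) : ∃ a b : ℂ,
      2 * (conj (z i) * a).re - 2 * (conj (w i) * b).re = c i ∧ a * w i + z i * b = d i := by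
    by_cases hi : (z i, w i) = (0, 0)
    · obtain ⟨hz, -⟩ := Prod.mk.inj hi
      exact ⟨0, 0, by simp [hc i hi], by simp [hz, hd i hi]⟩
    · exact exists_two_re_sub_eq_and_add_eq hi _ _
  choose ζ ω h using pointwise
  exact ⟨ζ, ω, h⟩

/-- Proposition 3.8(1): `(z,w)` is a critical point of the hyperkähler moment map `μ`
(i.e. its differential `dμ_{(z,w)} = ∑ (df)_{(zᵢ,wᵢ)} ⊗ ι*uᵢ` is not surjective onto
`k* × k*_ℂ`) iff `span{ι*uᵢ : (zᵢ,wᵢ) ≠ (0,0)} ⊊ k*`. -/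
theorem stmt6 (N : ℕ) (k : Submodule ℝ (Fin N → ℝ)) (z w : Fin N → ℂ) :
    (¬ ∀ (β1 : Module.Dual ℝ k) (β2 : k →ₗ[ℝ] ℂ), ∃ ζ ω : Fin N → ℂ,
        ∀ X : k,
          β1 X = Real.pi * ∑ i,
            (2 * ((starRingEnd ℂ) (z i) * ζ i).re - 2 * ((starRingEnd ℂ) (w i) * ω i).re)
              * (X : Fin N → ℝ) i ∧
          β2 X = (-2) * (Real.pi : ℂ) * Complex.I *
            ∑ i, (ζ i * w i + z i * ω i) * (((X : Fin N → ℝ) i : ℝ) : ℂ))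
    ↔ Submodule.span ℝ {f : Module.Dual ℝ k |
        ∃ i, (z i, w i) ≠ (0, 0) ∧ f = (LinearMap.proj i).comp k.subtype} ≠ ⊤ := by
  have hset : {f : Module.Dual ℝ k |
      ∃ i, (z i, w i) ≠ (0, 0) ∧ f = (LinearMap.proj i).comp k.subtype}
        = k.coordDual '' {i | (z i, w i) ≠ (0, 0)} := by
    ext f
    simp [Submodule.coordDual, eq_comm]
  rw [hset, Ne, not_iff_not]
  constructor
  · intro hsurj
    refine Submodule.eq_top_iff'.2 fun γ => ?_
    obtain ⟨ζ, ω, h⟩ := hsurj γ 0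
    refine Submodule.mem_span_coordDual_iff.2 ⟨fun i => Real.pi *
      (2 * (conj (z i) * ζ i).re - 2 * (conj (w i) * ω i).re), fun i hi => ?_,
      fun X => by simp only [(h X).1, mul_sum, mul_assoc]⟩
    obtain ⟨hz, hw⟩ := Prod.mk.inj (not_not.1 hi)
    simp [hz, hw]
  · intro hk β1 β2
    obtain ⟨c, hc0, hc⟩ := Submodule.exists_forall_eq_sum_mul hk β1
    obtain ⟨d, hd0, hd⟩ := Submodule.exists_forall_eq_sum_ofReal_mul hk β2
    obtain ⟨ζ, ω, h⟩ := exists_forall_two_re_sub_eq_and_add_eq (z := z) (w := w)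
      (c := fun i => c i / Real.pi) (d := fun i => d i / (-2 * Real.pi * I))
      (fun i hi => by simp [hc0 i (not_not.2 hi)]) (fun i hi => by simp [hd0 i (not_not.2 hi)])
    refine ⟨ζ, ω, fun X => ⟨?_, ?_⟩⟩
    · simp only [hc X, mul_sum, (h _).1]
      field_simp
    · simp only [hd X, mul_sum, (h _).2]
      field_simp
end

section
/- Suppose $(0,\beta)$ is a regular value of the hyperkähler moment map $\mu$, equivalently for every $(z,w) \in \mu_{\mathbb{C}}^{-1}(\beta)$ one has $\mathrm{span}\{\iota^* u_i : (z_i,w_i) \ne (0,0)\} = k^*$. If moreover for every $(z,w) \in \mu_{\mathbb{C}}^{-1}(\beta)$ we have $\mathrm{span}\{\iota^* u_i : z_i w_i \ne 0\} = k^*$, then for every $\alpha \in k^*$, every point of $\mu_{\mathbb{C}}^{-1}(\beta)$ is $\alpha$-semistable, i.e., $\alpha \in \sum_i \mathbb{R}_{\ge 0}|z_i|^2 \iota^* u_i + \sum_i \mathbb{R}_{\ge 0}|w_i|^2(-\iota^* u_i)$. -/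
/-! If `zᵢwᵢ ≠ 0` then `|zᵢ|²` and `|wᵢ|²` are both positive, so every real multiple of `ι*uᵢ`
is a combination `cᵢ|zᵢ|² ι*uᵢ + dᵢ|wᵢ|² (-ι*uᵢ)` with `cᵢ, dᵢ ≥ 0`. Hence the cone
`∑ ℝ≥0|zᵢ|² ι*uᵢ + ∑ ℝ≥0|wᵢ|²(-ι*uᵢ)` contains the span of `{ι*uᵢ : zᵢwᵢ ≠ 0}`, which is `k*`. -/

open Finset

lemma exists_nonneg_mul_sub_mul_eq {a b : ℝ} (ha : 0 < a) (hb : 0 < b) (t : ℝ) :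
    ∃ c d : ℝ, 0 ≤ c ∧ 0 ≤ d ∧ c * a - d * b = t :=
  ⟨max t 0 / a, max (-t) 0 / b, by positivity, by positivity, by
    rw [div_mul_cancel₀ _ ha.ne', div_mul_cancel₀ _ hb.ne', max_zero_sub_max_neg_zero_eq_self]⟩

lemma Submodule.exists_nonneg_sum_sub_smul_of_mem_span_image {ι M : Type*} [Fintype ι]
    [AddCommGroup M] [Module ℝ M] {f : ι → M} {a b : ι → ℝ} {x : M}
    (hx : x ∈ span ℝ (f '' {i | 0 < a i ∧ 0 < b i})) :
    ∃ c d : ι → ℝ, (∀ i, 0 ≤ c i) ∧ (∀ i, 0 ≤ d i) ∧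
      x = ∑ i, (c i * a i - d i * b i) • f i := by
  obtain ⟨l, hl, rfl⟩ := (Finsupp.mem_span_image_iff_linearCombination ℝ).mp hx
  have hcoeff : ∀ i, ∃ c d : ℝ, 0 ≤ c ∧ 0 ≤ d ∧ c * a i - d * b i = l i := by
    intro i
    by_cases hi : 0 < a i ∧ 0 < b i
    · exact exists_nonneg_mul_sub_mul_eq hi.1 hi.2 (l i)
    · exact ⟨0, 0, le_rfl, le_rfl, by simp [(Finsupp.mem_supported' ℝ l).mp hl i hi]⟩
  choose c d hc hd hcd using hcoeff
  refine ⟨c, d, hc, hd, ?_⟩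
  simp only [hcd, Finsupp.linearCombination_apply]
  exact Finsupp.sum_fintype _ _ fun i => zero_smul ℝ (f i)

lemma mul_ne_zero_iff_sq_norm_pos {z w : ℂ} : z * w ≠ 0 ↔ 0 < ‖z‖ ^ 2 ∧ 0 < ‖w‖ ^ 2 := by
  simp [sq_pos_iff]

theorem stmt7_general (N : ℕ) (k : Submodule ℝ (Fin N → ℝ)) (β : k →ₗ[ℝ] ℂ)
    (hreg2 : ∀ z w : Fin N → ℂ,
      (∀ X : k, β X = (-2) * (Real.pi : ℂ) * Complex.I *
          ∑ i, z i * w i * (((X : Fin N → ℝ) i : ℝ) : ℂ)) →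
      Submodule.span ℝ {f : Module.Dual ℝ k |
        ∃ i, z i * w i ≠ 0 ∧ f = (LinearMap.proj i).comp k.subtype} = ⊤) :
    ∀ (α : Module.Dual ℝ k) (z w : Fin N → ℂ),
      (∀ X : k, β X = (-2) * (Real.pi : ℂ) * Complex.I *
          ∑ i, z i * w i * (((X : Fin N → ℝ) i : ℝ) : ℂ)) →
      ∃ c d : Fin N → ℝ, (∀ i, 0 ≤ c i) ∧ (∀ i, 0 ≤ d i) ∧
        ∀ X : k, α X = ∑ i,
          (c i * ‖z i‖ ^ 2 - d i * ‖w i‖ ^ 2) * (X : Fin N → ℝ) i := by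
  intro α z w hβ
  set u : Fin N → Module.Dual ℝ k := fun i => (LinearMap.proj i).comp k.subtype
  have hspan : Submodule.span ℝ (u '' {i | 0 < ‖z i‖ ^ 2 ∧ 0 < ‖w i‖ ^ 2}) = ⊤ := by
    rw [← hreg2 z w hβ]
    congr 1
    ext f
    simp only [u, Set.mem_image, Set.mem_ofPred_eq, mul_ne_zero_iff_sq_norm_pos, eq_comm]
  obtain ⟨c, d, hc, hd, hα⟩ :=
    Submodule.exists_nonneg_sum_sub_smul_of_mem_span_image (hspan ▸ Submodule.mem_top (x := α))
  refine ⟨c, d, hc, hd, fun X => ?_⟩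
  simp [hα, u]

/-- Proposition 3.8(3): if `(0,β)` is a regular value of `μ` and moreover for every
`(z,w) ∈ μ_ℂ⁻¹(β)` the functionals `{ι*uᵢ : zᵢwᵢ ≠ 0}` span `k*`, then for every `α ∈ k*`
every point of `μ_ℂ⁻¹(β)` is `α`-semistable, i.e.
`α ∈ ∑ ℝ≥0|zᵢ|² ι*uᵢ + ∑ ℝ≥0|wᵢ|²(-ι*uᵢ)`. -/
theorem stmt7 (N : ℕ) (k : Submodule ℝ (Fin N → ℝ)) (β : k →ₗ[ℝ] ℂ)
    (hreg : ∀ z w : Fin N → ℂ,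
      (∀ X : k, β X = (-2) * (Real.pi : ℂ) * Complex.I *
          ∑ i, z i * w i * (((X : Fin N → ℝ) i : ℝ) : ℂ)) →
      Submodule.span ℝ {f : Module.Dual ℝ k |
        ∃ i, (z i, w i) ≠ (0, 0) ∧ f = (LinearMap.proj i).comp k.subtype} = ⊤)
    (hreg2 : ∀ z w : Fin N → ℂ,
      (∀ X : k, β X = (-2) * (Real.pi : ℂ) * Complex.I *
          ∑ i, z i * w i * (((X : Fin N → ℝ) i : ℝ) : ℂ)) →
      Submodule.span ℝ {f : Module.Dual ℝ k |
        ∃ i, z i * w i ≠ 0 ∧ f = (LinearMap.proj i).comp k.subtype} = ⊤) :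
    ∀ (α : Module.Dual ℝ k) (z w : Fin N → ℂ),
      (∀ X : k, β X = (-2) * (Real.pi : ℂ) * Complex.I *
          ∑ i, z i * w i * (((X : Fin N → ℝ) i : ℝ) : ℂ)) →
      ∃ c d : Fin N → ℝ, (∀ i, 0 ≤ c i) ∧ (∀ i, 0 ≤ d i) ∧
        ∀ X : k, α X = ∑ i,
          (c i * ‖z i‖ ^ 2 - d i * ‖w i‖ ^ 2) * (X : Fin N → ℝ) i :=
  stmt7_general N k β hreg2
end
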